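/- Equivariant implicit function theorem: Let n₁, n₂ be natural numbers, let Γ₁ ⊆ GL(n₁, ℝ) and Γ₂ ⊆ GL(n₂, ℝ) be finite subgroups, and let Ũ ⊆ ℝ^{n₁} be a Γ₁-invariant open neighbourhood of 0. Let ι : Γ₁ → Γ₂ be a group homomorphism and let f : Ũ → ℝ^{n₂} be a C^∞ map with f(σ·x) = ι(σ)·f(x) for all σ ∈ Γ₁ and x ∈ Ũ, f(0) = 0, and with surjective derivative Df|₀ : ℝ^{n₁} → ℝ^{n₂}. Let 𝕂 = ker(Df|₀), a Γ₁-invariant linear subspace of ℝ^{n₁} of dimension n₁ − n₂, and let 𝕋 be any Γ₁-invariant linear subspace of ℝ^{n₁} complementary to 𝕂. Then there exists a Γ₁-invariant open neighbourhood V ⊆ Ũ of 0 and a map F : V → 𝕂 × ℝ^{n₂} such that: (i) F is C^∞, injective, its image F(V) is open in 𝕂 × ℝ^{n₂}, and the inverse map F(V) → V is C^∞ (i.e. F is a C^∞ diffeomorphism onto its image); (ii) F is Γ₁-equivariant, where Γ₁ acts on 𝕂 × ℝ^{n₂} by σ·(k, w) = (σ·k, ι(σ)·w); (iii) the second component of F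 equals f on V, i.e. π₂ ∘ F = f|_V where π₂ : 𝕂 × ℝ^{n₂} → ℝ^{n₂} is the projection; (iv) the derivative DF|₀ maps 𝕋 isomorphically onto {0} × ℝ^{n₂}, i.e. the restriction of π₂ ∘ DF|₀ to 𝕋 is a linear isomorphism 𝕋 → ℝ^{n₂}. -/

import Mathlib

/-- The standard action of `GL(n, ℝ)` on `ℝⁿ` by matrix–vector multiplication. -/
def glAct {n : ℕ} (σ : Matrix.GeneralLinearGroup (Fin n) ℝ) (x : Fin n → ℝ) : Fin n → ℝ :=
  Matrix.mulVec (σ : Matrix (Fin n) (Fin n) ℝ) x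

noncomputable def glActL {n : ℕ} (σ : Matrix.GeneralLinearGroup (Fin n) ℝ) :
    (Fin n → ℝ) →L[ℝ] (Fin n → ℝ) :=
  LinearMap.toContinuousLinearMap (Matrix.mulVecLin (σ : Matrix (Fin n) (Fin n) ℝ))

lemma glActL_apply {n : ℕ} (σ : Matrix.GeneralLinearGroup (Fin n) ℝ) (x : Fin n → ℝ) :
    glActL σ x = glAct σ x := rfl

lemma glAct_mul {n : ℕ} (σ τ : Matrix.GeneralLinearGroup (Fin n) ℝ) (x : Fin n → ℝ) :
    glAct σ (glAct τ x) = glAct (σ * τ) x := by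
  simp [glAct, Matrix.mulVec_mulVec]

lemma glAct_one {n : ℕ} (x : Fin n → ℝ) : glAct 1 x = x := by
  simp [glAct]

lemma glAct_zero {n : ℕ} (σ : Matrix.GeneralLinearGroup (Fin n) ℝ) : glAct σ 0 = 0 := by
  simp [glAct]

set_option maxHeartbeats 2000000 in
set_option synthInstance.maxHeartbeats 400000 in
/-- Equivariant implicit function theorem. Given finite subgroups `Γ₁ ⊆ GL(n₁,ℝ)`,
`Γ₂ ⊆ GL(n₂,ℝ)`, a homomorphism `ι : Γ₁ → Γ₂`, a `Γ₁`-invariant open neighbourhood `U` of `0`,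
and a smooth `ι`-equivariant map `f : U → ℝ^{n₂}` with `f 0 = 0` and surjective derivative at
`0`, and given a `Γ₁`-invariant complement `T` to `K = ker (Df|₀)`, there is a `Γ₁`-invariant
open neighbourhood `V ⊆ U` of `0` and a smooth map `F : V → K × ℝ^{n₂}` which is an equivariant
diffeomorphism onto its open image, whose second component is `f`, and whose derivative at `0`
restricts to a linear isomorphism `T → ℝ^{n₂}` in the second component. -/
theorem equivariant_implicit_function_theorem
    (n₁ n₂ : ℕ)
    (Γ₁ : Subgroup (Matrix.GeneralLinearGroup (Fin n₁) ℝ))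
    (Γ₂ : Subgroup (Matrix.GeneralLinearGroup (Fin n₂) ℝ))
    (hΓ₁ : Finite Γ₁) (hΓ₂ : Finite Γ₂)
    (ι : Γ₁ →* Γ₂)
    (U : Set (Fin n₁ → ℝ)) (hUopen : IsOpen U) (hU0 : (0 : Fin n₁ → ℝ) ∈ U)
    (hUinv : ∀ σ : Γ₁, glAct (σ : Matrix.GeneralLinearGroup (Fin n₁) ℝ) '' U = U)
    (f : (Fin n₁ → ℝ) → (Fin n₂ → ℝ))
    (hf : ContDiffOn ℝ (⊤ : ℕ∞) f U)
    (hequiv : ∀ σ : Γ₁, ∀ x ∈ U,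
      f (glAct (σ : Matrix.GeneralLinearGroup (Fin n₁) ℝ) x)
        = glAct ((ι σ : Γ₂) : Matrix.GeneralLinearGroup (Fin n₂) ℝ) (f x))
    (hf0 : f 0 = 0)
    (hsurj : Function.Surjective (fderiv ℝ f 0))
    (T : Submodule ℝ (Fin n₁ → ℝ))
    (hTinv : ∀ σ : Γ₁, ∀ x ∈ T, glAct (σ : Matrix.GeneralLinearGroup (Fin n₁) ℝ) x ∈ T)
    (hTcompl : IsCompl (LinearMap.ker (fderiv ℝ f 0 : (Fin n₁ → ℝ) →ₗ[ℝ] (Fin n₂ → ℝ))) T) :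
    ∃ (V : Set (Fin n₁ → ℝ))
      (F : (Fin n₁ → ℝ) → (LinearMap.ker (fderiv ℝ f 0 : (Fin n₁ → ℝ) →ₗ[ℝ] (Fin n₂ → ℝ))) × (Fin n₂ → ℝ)),
      -- V is a Γ₁-invariant open neighbourhood of 0 contained in U
      V ⊆ U ∧ IsOpen V ∧ (0 : Fin n₁ → ℝ) ∈ V ∧
      (∀ σ : Γ₁, glAct (σ : Matrix.GeneralLinearGroup (Fin n₁) ℝ) '' V = V) ∧
      -- (i) F is a smooth diffeomorphism from V onto its open image
      ContDiffOn ℝ (⊤ : ℕ∞) F V ∧ Set.InjOn F V ∧ IsOpen (F '' V) ∧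
      (∃ G : (LinearMap.ker (fderiv ℝ f 0 : (Fin n₁ → ℝ) →ₗ[ℝ] (Fin n₂ → ℝ))) × (Fin n₂ → ℝ) → (Fin n₁ → ℝ),
        ContDiffOn ℝ (⊤ : ℕ∞) G (F '' V) ∧ ∀ x ∈ V, G (F x) = x) ∧
      -- (ii) F is Γ₁-equivariant, where Γ₁ acts on K × ℝ^{n₂} by σ·(k,w) = (σ·k, ι(σ)·w)
      (∀ σ : Γ₁, ∀ x ∈ V,
        (((F (glAct (σ : Matrix.GeneralLinearGroup (Fin n₁) ℝ) x)).1 : Fin n₁ → ℝ)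
            = glAct (σ : Matrix.GeneralLinearGroup (Fin n₁) ℝ) ((F x).1 : Fin n₁ → ℝ)) ∧
        ((F (glAct (σ : Matrix.GeneralLinearGroup (Fin n₁) ℝ) x)).2
            = glAct ((ι σ : Γ₂) : Matrix.GeneralLinearGroup (Fin n₂) ℝ) ((F x).2))) ∧
      -- (iii) the second component of F equals f on V
      (∀ x ∈ V, (F x).2 = f x) ∧
      -- (iv) π₂ ∘ DF|₀ restricts to a linear isomorphism T → ℝ^{n₂}
      Function.Bijective (fun t : T => (fderiv ℝ F 0 (t : Fin n₁ → ℝ)).2) := by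
  classical
  have := hΓ₁
  set D : (Fin n₁ → ℝ) →L[ℝ] (Fin n₂ → ℝ) := fderiv ℝ f 0 with hDdef
  set K : Submodule ℝ (Fin n₁ → ℝ) := LinearMap.ker (D : (Fin n₁ → ℝ) →ₗ[ℝ] (Fin n₂ → ℝ)) with hKdef
  have hU0' : U ∈ nhds (0 : Fin n₁ → ℝ) := hUopen.mem_nhds hU0
  have hfat : ContDiffAt ℝ (⊤ : ℕ∞) f 0 := hf.contDiffAt hU0'
  have hfd : HasFDerivAt f D 0 := (hfat.differentiableAt (by simp)).hasFDerivAt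
  -- projection onto K along T
  set Pl : (Fin n₁ → ℝ) →ₗ[ℝ] K := K.projectionOnto T hTcompl with hPldef
  set Pc : (Fin n₁ → ℝ) →L[ℝ] K := LinearMap.toContinuousLinearMap Pl with hPcdef
  have hPcPl : ∀ x, Pc x = Pl x := fun _ => rfl
  have hx_decomp : ∀ x : Fin n₁ → ℝ, x - (Pl x : Fin n₁ → ℝ) ∈ T := by
    intro x
    rw [← Submodule.linearProjOfIsCompl_apply_eq_zero_iff (h := hTcompl)]
    simp [Pl, Submodule.linearProjOfIsCompl_apply_left hTcompl (Pl x), -Submodule.coe_projectionOnto_apply]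
  -- the map F
  set Fm : (Fin n₁ → ℝ) → K × (Fin n₂ → ℝ) := fun x => (Pc x, f x) with hFmdef
  set A : (Fin n₁ → ℝ) →L[ℝ] K × (Fin n₂ → ℝ) := Pc.prod D with hAdef
  have hAapp : ∀ x, A x = (Pc x, D x) := fun _ => rfl
  -- A is bijective
  have hAbij : Function.Bijective A := by
    constructor
    · intro x y hxy
      have h := hxy
      rw [hAapp, hAapp, Prod.mk.injEq] at h
      have h1 : Pl x = Pl y := h.1
      have h2 : D x = D y := h.2
      have hK : x - y ∈ K := by simp [hKdef, LinearMap.mem_ker, map_sub, h2]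
      have hP0 : Pl (x - y) = 0 := by simp [map_sub, h1]
      have hT : x - y ∈ T := (Submodule.linearProjOfIsCompl_apply_eq_zero_iff hTcompl).1 hP0
      have hxy0 : x - y = 0 := (Submodule.disjoint_def.1 hTcompl.disjoint) _ hK hT
      exact sub_eq_zero.1 hxy0
    · intro p
      obtain ⟨k, w⟩ := p
      obtain ⟨x, hx⟩ := hsurj w
      obtain ⟨a, b, ha, hb, hab⟩ := Submodule.codisjoint_iff_exists_add_eq.mp hTcompl.codisjoint x
      refine ⟨(k : Fin n₁ → ℝ) + b, ?_⟩
      have hPk : Pl ((k : Fin n₁ → ℝ) + b) = k := by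
        rw [map_add, Submodule.linearProjOfIsCompl_apply_left hTcompl k,
          Submodule.linearProjOfIsCompl_apply_right' hTcompl hb, add_zero]
      have hDk : D ((k : Fin n₁ → ℝ) + b) = w := by
        have hka : D (k : Fin n₁ → ℝ) = 0 := k.2
        have hdb : D b = w := by
          have h := congrArg D hab
          rw [map_add, show D a = 0 from ha, zero_add] at h
          rw [h, hx]
        rw [map_add, hka, zero_add, hdb]
      rw [hAapp]
      exact Prod.ext (by rw [hPcPl, hPk]) (by rw [hDk])
  -- A as a continuous linear equivalence
  let Aeq : (Fin n₁ → ℝ) ≃L[ℝ] K × (Fin n₂ → ℝ) :=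
    (LinearEquiv.ofBijective (A : (Fin n₁ → ℝ) →ₗ[ℝ] K × (Fin n₂ → ℝ)) hAbij).toContinuousLinearEquiv
  have hAeqA : (Aeq : (Fin n₁ → ℝ) →L[ℝ] K × (Fin n₂ → ℝ)) = A := by
    ext x <;> rfl
  have hAeqapp : ∀ x, Aeq x = A x := fun _ => rfl
  -- derivative of Fm at 0
  have hFd : HasFDerivAt Fm A 0 := Pc.hasFDerivAt.prodMk hfd
  have hFd' : HasFDerivAt Fm ((Aeq : (Fin n₁ → ℝ) →L[ℝ] K × (Fin n₂ → ℝ))) 0 := by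
    rw [hAeqA]; exact hFd
  have hFat : ContDiffAt ℝ (⊤ : ℕ∞) Fm 0 := Pc.contDiff.contDiffAt.prodMk hfat
  -- local homeomorphism from the inverse function theorem
  let Φ := hFat.toOpenPartialHomeomorph Fm hFd' (by simp)
  have hΦcoe : ⇑Φ = Fm := hFat.toOpenPartialHomeomorph_coe hFd' (by simp)
  have hΦ0 : (0 : Fin n₁ → ℝ) ∈ Φ.source := hFat.mem_toOpenPartialHomeomorph_source hFd' (by simp)
  -- the set where the derivative is invertible
  have hdf : ContinuousOn (fderiv ℝ f) U := hf.continuousOn_fderiv_of_isOpen hUopen (by simp)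
  set qm : (Fin n₁ → ℝ) → ((Fin n₁ → ℝ) →L[ℝ] (Fin n₁ → ℝ)) :=
    fun x => (Aeq.symm : (LinearMap.ker (D : (Fin n₁ → ℝ) →ₗ[ℝ] (Fin n₂ → ℝ))) × (Fin n₂ → ℝ) →L[ℝ] (Fin n₁ → ℝ)).comp
      (Pc.prod (fderiv ℝ f x)) with hqmdef
  have hqcont : ContinuousOn qm U := by
    have h1 : qm = fun x =>
        ((Aeq.symm : (LinearMap.ker (D : (Fin n₁ → ℝ) →ₗ[ℝ] (Fin n₂ → ℝ))) × (Fin n₂ → ℝ) →L[ℝ] (Fin n₁ → ℝ)).comp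
            ((ContinuousLinearMap.inl ℝ K (Fin n₂ → ℝ)).comp Pc))
          + ((Aeq.symm : (LinearMap.ker (D : (Fin n₁ → ℝ) →ₗ[ℝ] (Fin n₂ → ℝ))) × (Fin n₂ → ℝ) →L[ℝ] (Fin n₁ → ℝ)).comp
              (ContinuousLinearMap.inr ℝ K (Fin n₂ → ℝ))).comp (fderiv ℝ f x) := by
      funext x
      apply ContinuousLinearMap.ext
      intro v
      show Aeq.symm ((Pc.prod (fderiv ℝ f x)) v)
        = Aeq.symm ((ContinuousLinearMap.inl ℝ K (Fin n₂ → ℝ)) (Pc v))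
          + Aeq.symm ((ContinuousLinearMap.inr ℝ K (Fin n₂ → ℝ)) ((fderiv ℝ f x) v))
      rw [← map_add]
      congr 1
      simp [Prod.ext_iff]
    rw [h1]
    exact continuousOn_const.add (ContinuousOn.clm_comp continuousOn_const hdf)
  set s : Set (Fin n₁ → ℝ) := U ∩ qm ⁻¹' {u | IsUnit u} with hsdef
  have hsopen : IsOpen s := hqcont.isOpen_inter_preimage hUopen Units.isOpen
  have hq0 : qm 0 = 1 := by
    apply ContinuousLinearMap.ext
    intro v
    have h1 : Pc.prod (fderiv ℝ f 0) = A := rfl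
    show (Aeq.symm : (LinearMap.ker (D : (Fin n₁ → ℝ) →ₗ[ℝ] (Fin n₂ → ℝ))) × (Fin n₂ → ℝ) →L[ℝ] (Fin n₁ → ℝ)) ((Pc.prod (fderiv ℝ f 0)) v) = v
    rw [h1]
    have h2 : A v = Aeq v := rfl
    rw [h2]
    exact Aeq.symm_apply_apply v
  have hs0 : (0 : Fin n₁ → ℝ) ∈ s := by
    refine ⟨hU0, ?_⟩
    show IsUnit (qm 0)
    rw [hq0]
    exact isUnit_one
  -- the invariant neighbourhood V
  set W : Set (Fin n₁ → ℝ) := Φ.source ∩ s with hWdef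
  have hWopen : IsOpen W := Φ.open_source.inter hsopen
  have hW0 : (0 : Fin n₁ → ℝ) ∈ W := ⟨hΦ0, hs0⟩
  set V : Set (Fin n₁ → ℝ) :=
    ⋂ σ : Γ₁, glAct (σ : Matrix.GeneralLinearGroup (Fin n₁) ℝ) ⁻¹' W with hVdef
  have hglcoe : ∀ σ : Matrix.GeneralLinearGroup (Fin n₁) ℝ, ⇑(glActL σ) = glAct σ :=
    fun σ => funext (glActL_apply σ)
  have hVopen : IsOpen V := by
    apply isOpen_iInter_of_finite
    intro σ
    rw [← hglcoe]
    exact hWopen.preimage (glActL _).continuous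
  have hV0 : (0 : Fin n₁ → ℝ) ∈ V := by
    rw [Set.mem_iInter]
    intro σ
    show glAct _ 0 ∈ W
    rw [glAct_zero]
    exact hW0
  have hVsubW : V ⊆ W := by
    intro x hx
    have h := Set.mem_iInter.1 hx 1
    simpa [glAct_one] using h
  have hVU : V ⊆ U := fun x hx => (hVsubW hx).2.1
  have hVΦ : V ⊆ Φ.source := fun x hx => (hVsubW hx).1
  have hVmem : ∀ (τ : Γ₁) (x : Fin n₁ → ℝ), x ∈ V →
      glAct (τ : Matrix.GeneralLinearGroup (Fin n₁) ℝ) x ∈ V := by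
    intro τ x hx
    rw [Set.mem_iInter] at hx ⊢
    intro σ
    have h := hx (σ * τ)
    simp only [Set.mem_preimage] at h ⊢
    rw [glAct_mul]
    simpa [Subgroup.coe_mul] using h
  have hVinv : ∀ τ : Γ₁, glAct (τ : Matrix.GeneralLinearGroup (Fin n₁) ℝ) '' V = V := by
    intro τ
    apply Set.Subset.antisymm
    · rintro y ⟨x, hx, rfl⟩
      exact hVmem τ x hx
    · intro y hy
      refine ⟨glAct ((τ⁻¹ : Γ₁) : Matrix.GeneralLinearGroup (Fin n₁) ℝ) y, hVmem τ⁻¹ y hy, ?_⟩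
      rw [glAct_mul]
      have h1 : ((τ : Matrix.GeneralLinearGroup (Fin n₁) ℝ))
          * ((τ⁻¹ : Γ₁) : Matrix.GeneralLinearGroup (Fin n₁) ℝ) = 1 := by
        rw [← Subgroup.coe_mul]
        simp
      rw [h1, glAct_one]
  -- equivariance of the derivative and the projection
  have hDcomm : ∀ σ : Γ₁,
      D.comp (glActL (σ : Matrix.GeneralLinearGroup (Fin n₁) ℝ))
        = (glActL ((ι σ : Γ₂) : Matrix.GeneralLinearGroup (Fin n₂) ℝ)).comp D := by
    intro σ
    have hL0 : glActL (σ : Matrix.GeneralLinearGroup (Fin n₁) ℝ) (0 : Fin n₁ → ℝ) = 0 :=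
      map_zero _
    have h1 : HasFDerivAt (f ∘ ⇑(glActL (σ : Matrix.GeneralLinearGroup (Fin n₁) ℝ)))
        (D.comp (glActL (σ : Matrix.GeneralLinearGroup (Fin n₁) ℝ))) 0 := by
      refine HasFDerivAt.comp 0 ?_ (glActL _).hasFDerivAt
      rw [hL0]
      exact hfd
    have h2 : HasFDerivAt (⇑(glActL ((ι σ : Γ₂) : Matrix.GeneralLinearGroup (Fin n₂) ℝ)) ∘ f)
        ((glActL ((ι σ : Γ₂) : Matrix.GeneralLinearGroup (Fin n₂) ℝ)).comp D) 0 := by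
      refine HasFDerivAt.comp 0 ?_ hfd
      exact (glActL _).hasFDerivAt
    have hev : (f ∘ ⇑(glActL (σ : Matrix.GeneralLinearGroup (Fin n₁) ℝ)))
        =ᶠ[nhds (0 : Fin n₁ → ℝ)]
        (⇑(glActL ((ι σ : Γ₂) : Matrix.GeneralLinearGroup (Fin n₂) ℝ)) ∘ f) := by
      filter_upwards [hU0'] with x hx
      show f (glActL _ x) = glActL _ (f x)
      rw [glActL_apply, glActL_apply]
      exact hequiv σ x hx
    exact h1.unique (h2.congr_of_eventuallyEq hev)
  have hKstab : ∀ σ : Γ₁, ∀ v ∈ K,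
      glAct (σ : Matrix.GeneralLinearGroup (Fin n₁) ℝ) v ∈ K := by
    intro σ v hv
    have hv' : D v = 0 := hv
    show D (glAct _ v) = 0
    rw [← glActL_apply]
    have h := congrArg (fun M : (Fin n₁ → ℝ) →L[ℝ] (Fin n₂ → ℝ) => M v) (hDcomm σ)
    simp only [ContinuousLinearMap.comp_apply] at h
    rw [h, hv', map_zero]
  have hPcomm : ∀ (σ : Γ₁) (x : Fin n₁ → ℝ),
      ((Pl (glAct (σ : Matrix.GeneralLinearGroup (Fin n₁) ℝ) x) : Fin n₁ → ℝ))
        = glAct (σ : Matrix.GeneralLinearGroup (Fin n₁) ℝ) ((Pl x : Fin n₁ → ℝ)) := by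
    intro σ x
    have hxd := hx_decomp x
    have hsplit : glAct (σ : Matrix.GeneralLinearGroup (Fin n₁) ℝ) x
        = glAct (σ : Matrix.GeneralLinearGroup (Fin n₁) ℝ) ((Pl x : Fin n₁ → ℝ))
          + glAct (σ : Matrix.GeneralLinearGroup (Fin n₁) ℝ) (x - (Pl x : Fin n₁ → ℝ)) := by
      rw [← glActL_apply, ← glActL_apply, ← glActL_apply, ← map_add]
      congr 1
      abel
    have hk : glAct (σ : Matrix.GeneralLinearGroup (Fin n₁) ℝ) ((Pl x : Fin n₁ → ℝ)) ∈ K :=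
      hKstab σ _ (Pl x).2
    have ht : glAct (σ : Matrix.GeneralLinearGroup (Fin n₁) ℝ) (x - (Pl x : Fin n₁ → ℝ)) ∈ T :=
      hTinv σ _ hxd
    have e1 : Pl (glAct (σ : Matrix.GeneralLinearGroup (Fin n₁) ℝ) ((Pl x : Fin n₁ → ℝ)))
        = ⟨glAct (σ : Matrix.GeneralLinearGroup (Fin n₁) ℝ) ((Pl x : Fin n₁ → ℝ)), hk⟩ :=
      Submodule.linearProjOfIsCompl_apply_left hTcompl ⟨_, hk⟩
    have e2 : Pl (glAct (σ : Matrix.GeneralLinearGroup (Fin n₁) ℝ) (x - (Pl x : Fin n₁ → ℝ))) = 0 :=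
      Submodule.linearProjOfIsCompl_apply_right' hTcompl ht
    have e3 : Pl (glAct (σ : Matrix.GeneralLinearGroup (Fin n₁) ℝ) x)
        = ⟨glAct (σ : Matrix.GeneralLinearGroup (Fin n₁) ℝ) ((Pl x : Fin n₁ → ℝ)), hk⟩ := by
      rw [hsplit, map_add, e1, e2, add_zero]
    rw [e3]
  -- assemble the result
  refine ⟨V, Fm, hVU, hVopen, hV0, hVinv, ?_, ?_, ?_, ?_, ?_, ?_, ?_⟩
  · exact ContDiffOn.prodMk Pc.contDiff.contDiffOn (hf.mono hVU)
  · have h := Φ.injOn.mono hVΦ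
    rwa [hΦcoe] at h
  · rw [← hΦcoe]
    exact Φ.isOpen_image_of_subset_source hVopen hVΦ
  · refine ⟨Φ.symm, ?_, ?_⟩
    · rintro y ⟨x, hxV, rfl⟩
      apply ContDiffAt.contDiffWithinAt
      have hxU : x ∈ U := hVU hxV
      have hxs : IsUnit (qm x) := (hVsubW hxV).2.2
      have hdiffx : HasFDerivAt f (fderiv ℝ f x) x :=
        ((hf.contDiffAt (hUopen.mem_nhds hxU)).differentiableAt (by simp)).hasFDerivAt
      have hqbij : Function.Bijective (qm x) := by
        obtain ⟨u, hu⟩ := hxs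
        refine Function.bijective_iff_has_inverse.2
          ⟨(↑u⁻¹ : (Fin n₁ → ℝ) →L[ℝ] (Fin n₁ → ℝ)), ?_, ?_⟩
        · intro v
          have h1 := congrArg
            (fun M : (Fin n₁ → ℝ) →L[ℝ] (Fin n₁ → ℝ) => M v) u.inv_mul
          simp only [ContinuousLinearMap.mul_apply, ContinuousLinearMap.one_apply] at h1
          rw [← hu]
          exact h1
        · intro v
          have h1 := congrArg
            (fun M : (Fin n₁ → ℝ) →L[ℝ] (Fin n₁ → ℝ) => M v) u.mul_inv
          simp only [ContinuousLinearMap.mul_apply, ContinuousLinearMap.one_apply] at h1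
          rw [← hu]
          exact h1
      have hBfun : ⇑(Pc.prod (fderiv ℝ f x)) = ⇑Aeq ∘ ⇑(qm x) := by
        funext v
        show (Pc.prod (fderiv ℝ f x)) v = Aeq (Aeq.symm ((Pc.prod (fderiv ℝ f x)) v))
        rw [Aeq.apply_symm_apply]
      have hBbij : Function.Bijective (Pc.prod (fderiv ℝ f x)) := by
        rw [hBfun]
        exact Aeq.bijective.comp hqbij
      let Beq : (Fin n₁ → ℝ) ≃L[ℝ] K × (Fin n₂ → ℝ) :=
        (LinearEquiv.ofBijective
          ((Pc.prod (fderiv ℝ f x)) : (Fin n₁ → ℝ) →ₗ[ℝ] K × (Fin n₂ → ℝ))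
          hBbij).toContinuousLinearEquiv
      have hBeq : (Beq : (Fin n₁ → ℝ) →L[ℝ] K × (Fin n₂ → ℝ)) = Pc.prod (fderiv ℝ f x) := by
        ext v <;> rfl
      have hxΦ := hVΦ hxV
      have hyt : Fm x ∈ Φ.target := by
        rw [← hΦcoe]
        exact Φ.map_source hxΦ
      have hsymm : Φ.symm (Fm x) = x := by
        rw [← hΦcoe]
        exact Φ.left_inv hxΦ
      refine Φ.contDiffAt_symm hyt (f₀' := Beq) ?_ ?_
      · rw [hsymm, hΦcoe, hBeq]
        exact Pc.hasFDerivAt.prodMk hdiffx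
      · rw [hsymm, hΦcoe]
        exact Pc.contDiff.contDiffAt.prodMk (hf.contDiffAt (hUopen.mem_nhds hxU))
    · intro x hx
      rw [← hΦcoe]
      exact Φ.left_inv (hVΦ hx)
  · intro σ x hx
    constructor
    · exact hPcomm σ x
    · exact hequiv σ x (hVU hx)
  · intro x hx
    rfl
  · rw [hFd.fderiv]
    constructor
    · intro t₁ t₂ h
      have h2 : D (t₁ : Fin n₁ → ℝ) = D (t₂ : Fin n₁ → ℝ) := h
      have hK' : (t₁ : Fin n₁ → ℝ) - (t₂ : Fin n₁ → ℝ) ∈ K := by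
        show D _ = 0
        rw [map_sub, h2, sub_self]
      have hT' : (t₁ : Fin n₁ → ℝ) - (t₂ : Fin n₁ → ℝ) ∈ T := sub_mem t₁.2 t₂.2
      have h0 := (Submodule.disjoint_def.1 hTcompl.disjoint) _ hK' hT'
      exact Subtype.ext (sub_eq_zero.1 h0)
    · intro w
      obtain ⟨x, hx⟩ := hsurj w
      obtain ⟨a, b, ha, hb, hab⟩ := Submodule.codisjoint_iff_exists_add_eq.mp hTcompl.codisjoint x
      refine ⟨⟨b, hb⟩, ?_⟩
      show (A b).2 = w
      have ha' : D a = 0 := ha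
      have hdb : D b = w := by
        have h := congrArg D hab
        rw [map_add, ha', zero_add] at h
        rw [h, hx]
      exact hdb
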